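/- Fix ρ, q, s > 0, W ⊂ ℤ^d finite, and η, η' ∈ ℝ^W. The difference of the quenched random-field Ising Hamiltonian single-site energies satisfies: the oscillation in τ_x of H[η](τ) - H[η'](τ) equals 2ρ⁻²s⁻¹ |Σ_{z∈W}((ρ⁻² + s⁻¹I_W - qΔ)⁻¹)_{x,z}(η_z - η'_z)|, and hence is bounded by 2ρ⁻²s⁻¹ Σ_{z∈W}((ρ⁻² - qΔ)⁻¹)_{x,z}|η_z - η'_z|. -/
import Mathlib


/-- The lattice `ℤ^d`. -/
abbrev Zd (d : ℕ) := Fin d → ℤ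

/-- Nearest-neighbor adjacency matrix of `ℤ^d`. -/
noncomputable def adj {d : ℕ} (x y : Zd d) : ℝ :=
  if (∑ i, (x i - y i).natAbs) = 1 then 1 else 0

/-- Entrywise powers of a general infinite matrix `C`. -/
noncomputable def matPow {d : ℕ} (C : Zd d → Zd d → ℝ) : ℕ → Zd d → Zd d → ℝ
  | 0 => fun x y => if x = y then 1 else 0
  | n + 1 => fun x y => ∑' z : Zd d, C x z * matPow C n z y

namespace QFaux

variable {d : ℕ}

/-- The (at most `2d`) nearest neighbors of a point. -/
noncomputable def nbrs (x : Zd d) : Finset (Zd d) :=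
  Finset.image (fun p : Fin d × Bool =>
    Function.update x p.1 (x p.1 + if p.2 then 1 else -1)) Finset.univ

lemma card_nbrs_le (x : Zd d) : (nbrs x).card ≤ 2 * d := by
  classical
  calc (nbrs x).card ≤ (Finset.univ : Finset (Fin d × Bool)).card := Finset.card_image_le
    _ = d * 2 := by simp [Finset.card_univ]
    _ = 2 * d := by ring

lemma adj_nonneg (x y : Zd d) : 0 ≤ adj x y := by
  unfold adj; split <;> norm_num

lemma adj_le_one (x y : Zd d) : adj x y ≤ 1 := by
  unfold adj; split <;> norm_num

lemma mem_nbrs_of_adj {x z : Zd d} (h : (∑ i, (x i - z i).natAbs) = 1) : z ∈ nbrs x := by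
  classical
  have hne : (∑ i, (x i - z i).natAbs) ≠ 0 := by omega
  obtain ⟨i, -, hi⟩ := Finset.exists_ne_zero_of_sum_ne_zero hne
  have hle : (x i - z i).natAbs ≤ ∑ j, (x j - z j).natAbs :=
    Finset.single_le_sum (f := fun j => (x j - z j).natAbs) (fun j _ => Nat.zero_le _) (Finset.mem_univ i)
  have hfi : (x i - z i).natAbs = 1 := by omega
  have hrest : ∀ j, j ≠ i → (x j - z j).natAbs = 0 := by
    have h2 : (x i - z i).natAbs + ∑ j ∈ Finset.univ.erase i, (x j - z j).natAbs
        = ∑ j, (x j - z j).natAbs := by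
      simpa using Finset.add_sum_erase Finset.univ (fun j => (x j - z j).natAbs)
        (Finset.mem_univ i)
    intro j hj
    have h3 : ∑ j ∈ Finset.univ.erase i, (x j - z j).natAbs = 0 := by omega
    exact (Finset.sum_eq_zero_iff.1 h3) j (Finset.mem_erase.2 ⟨hj, Finset.mem_univ j⟩)
  have hzi : z i = x i + 1 ∨ z i = x i - 1 := by omega
  rcases hzi with hzi | hzi
  · refine Finset.mem_image.2 ⟨(i, true), Finset.mem_univ _, ?_⟩
    funext j
    by_cases hji : j = i
    · subst hji; simp [Function.update_self, hzi, sub_eq_add_neg]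
    · have := hrest j hji
      simp only [Function.update_of_ne hji]
      omega
  · refine Finset.mem_image.2 ⟨(i, false), Finset.mem_univ _, ?_⟩
    funext j
    by_cases hji : j = i
    · subst hji; simp [Function.update_self, hzi, sub_eq_add_neg]
    · have := hrest j hji
      simp only [Function.update_of_ne hji]
      omega

lemma adj_eq_zero {x z : Zd d} (h : z ∉ nbrs x) : adj x z = 0 := by
  unfold adj
  split
  · exact absurd (mem_nbrs_of_adj ‹_›) h
  · rfl

section Kmat

variable (K : Zd d → Zd d → ℝ)

lemma matPow_succ_eq_sum (hsupp : ∀ z w, w ∉ nbrs z → K z w = 0) (n : ℕ) (x y : Zd d) :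
    matPow K (n + 1) x y = ∑ z ∈ nbrs x, K x z * matPow K n z y := by
  show (∑' z : Zd d, K x z * matPow K n z y) = _
  refine tsum_eq_sum ?_
  intro z hz
  rw [hsupp x z hz, zero_mul]

lemma matPow_nonneg (hK0 : ∀ z w, 0 ≤ K z w) : ∀ n x y, 0 ≤ matPow K n x y := by
  intro n
  induction n with
  | zero => intro x y; unfold matPow; split <;> norm_num
  | succ n ih =>
    intro x y
    exact tsum_nonneg fun z => mul_nonneg (hK0 x z) (ih z y)

lemma matPow_le_pow (hK0 : ∀ z w, 0 ≤ K z w) (hsupp : ∀ z w, w ∉ nbrs z → K z w = 0)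
    {r : ℝ} (hr0 : 0 ≤ r) (hrow : ∀ z, ∑ w ∈ nbrs z, K z w ≤ r) :
    ∀ n x y, matPow K n x y ≤ r ^ n := by
  intro n
  induction n with
  | zero => intro x y; unfold matPow; split <;> norm_num
  | succ n ih =>
    intro x y
    rw [matPow_succ_eq_sum K hsupp]
    calc ∑ z ∈ nbrs x, K x z * matPow K n z y
        ≤ ∑ z ∈ nbrs x, K x z * r ^ n :=
          Finset.sum_le_sum fun z _ => mul_le_mul_of_nonneg_left (ih z y) (hK0 x z)
      _ = (∑ z ∈ nbrs x, K x z) * r ^ n := by rw [Finset.sum_mul]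
      _ ≤ r * r ^ n := mul_le_mul_of_nonneg_right (hrow x) (pow_nonneg hr0 n)
      _ = r ^ (n + 1) := by ring

lemma matPow_mono (K' : Zd d → Zd d → ℝ)
    (hK0 : ∀ z w, 0 ≤ K z w) (hK'0 : ∀ z w, 0 ≤ K' z w)
    (hsupp : ∀ z w, w ∉ nbrs z → K z w = 0) (hsupp' : ∀ z w, w ∉ nbrs z → K' z w = 0)
    (hle : ∀ z w, K z w ≤ K' z w) :
    ∀ n x y, matPow K n x y ≤ matPow K' n x y := by
  intro n
  induction n with
  | zero => intro x y; exact le_rfl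
  | succ n ih =>
    intro x y
    rw [matPow_succ_eq_sum K hsupp, matPow_succ_eq_sum K' hsupp']
    refine Finset.sum_le_sum fun z _ => ?_
    exact mul_le_mul (hle x z) (ih z y) (matPow_nonneg K hK0 n z y) (hK'0 x z)

end Kmat

end QFaux

open QFaux in
/-- The oscillation in `τ_x` of the difference of quenched random-field Hamiltonians
`H[η] - H[η']` equals `2ρ⁻²s⁻¹|Σ_{z∈W} A⁻¹_{x,z}(η_z - η'_z)|`, with
`A = ρ⁻² + s⁻¹I_W - qΔ`, and is bounded by
`2ρ⁻²s⁻¹ Σ_{z∈W} B⁻¹_{x,z}|η_z - η'_z|` with `B = ρ⁻² - qΔ`. -/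
theorem quenched_field_oscillation_bound (d : ℕ) (hd : 0 < d) (ρ q s : ℝ)
    (hρ : 0 < ρ) (hq : 0 < q) (hs : 0 < s) (W : Finset (Zd d))
    (η η' : Zd d → ℝ) (x : Zd d) :
    let dA : Zd d → ℝ := fun z => (ρ ^ 2)⁻¹ + 2 * d * q + (if z ∈ W then s⁻¹ else 0)
    let dB : Zd d → ℝ := fun _ => (ρ ^ 2)⁻¹ + 2 * d * q
    let KA : Zd d → Zd d → ℝ := fun z w => q * adj z w / dA z
    let KB : Zd d → Zd d → ℝ := fun z w => q * adj z w / dB z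
    let invA : Zd d → Zd d → ℝ := fun z w => (∑' n : ℕ, matPow KA n z w) / dA w
    let invB : Zd d → Zd d → ℝ := fun z w => (∑' n : ℕ, matPow KB n z w) / dB w
    let g : ℝ := (ρ ^ 2)⁻¹ * s⁻¹ * ∑ z ∈ W, invA x z * (η z - η' z)
    let u : ℝ → ℝ := fun τx => -(τx * g)
    |u 1 - u (-1)| = 2 * ((ρ ^ 2)⁻¹ * s⁻¹ * |∑ z ∈ W, invA x z * (η z - η' z)|) ∧
    |u 1 - u (-1)| ≤ 2 * (ρ ^ 2)⁻¹ * s⁻¹ * ∑ z ∈ W, invB x z * |η z - η' z| := by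
  intro dA dB KA KB invA invB g u
  classical
  -- basic positivity
  have hρ2 : (0:ℝ) < (ρ ^ 2)⁻¹ := by positivity
  set D : ℝ := (ρ ^ 2)⁻¹ + 2 * d * q with hD
  have hD0 : 0 < D := by positivity
  have hdA_ge : ∀ z, D ≤ dA z := by
    intro z
    simp only [dA, hD]
    split <;> [linarith [inv_nonneg.2 hs.le]; linarith]
  have hdA0 : ∀ z, 0 < dA z := fun z => lt_of_lt_of_le hD0 (hdA_ge z)
  set r : ℝ := 2 * d * q / D with hr
  have hr0 : 0 ≤ r := by positivity
  have hr1 : r < 1 := by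
    rw [hr, div_lt_one hD0, hD]; linarith
  -- properties of the kernels
  have hKA0 : ∀ z w, 0 ≤ KA z w := fun z w =>
    div_nonneg (mul_nonneg hq.le (adj_nonneg z w)) (hdA0 z).le
  have hKB0 : ∀ z w, 0 ≤ KB z w := fun z w =>
    div_nonneg (mul_nonneg hq.le (adj_nonneg z w)) hD0.le
  have hKAsupp : ∀ z w, w ∉ nbrs z → KA z w = 0 := by
    intro z w h; simp [KA, adj_eq_zero h]
  have hKBsupp : ∀ z w, w ∉ nbrs z → KB z w = 0 := by
    intro z w h; simp [KB, adj_eq_zero h]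
  have hterm : ∀ (dz : ℝ), D ≤ dz → ∀ z w : Zd d, q * adj z w / dz ≤ q / D := by
    intro dz hdz z w
    exact div_le_div₀ hq.le (by nlinarith [adj_le_one z w, adj_nonneg z w]) hD0 hdz
  have hrowgen : ∀ (dz : Zd d → ℝ), (∀ z, D ≤ dz z) →
      ∀ z, ∑ w ∈ nbrs z, q * adj z w / dz z ≤ r := by
    intro dz hdz z
    calc ∑ w ∈ nbrs z, q * adj z w / dz z
        ≤ (nbrs z).card • (q / D) :=
          Finset.sum_le_card_nsmul _ _ _ (fun w _ => hterm (dz z) (hdz z) z w)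
      _ = ((nbrs z).card : ℝ) * (q / D) := by rw [nsmul_eq_mul]
      _ ≤ (2 * d : ℝ) * (q / D) := by
          refine mul_le_mul_of_nonneg_right ?_ (by positivity)
          exact_mod_cast card_nbrs_le z
      _ = r := by rw [hr]; ring
  have hKArow : ∀ z, ∑ w ∈ nbrs z, KA z w ≤ r := hrowgen dA hdA_ge
  have hKBrow : ∀ z, ∑ w ∈ nbrs z, KB z w ≤ r := hrowgen dB (fun _ => le_refl D)
  have hKAle : ∀ z w, KA z w ≤ KB z w := by
    intro z w
    exact div_le_div₀ (mul_nonneg hq.le (adj_nonneg z w)) le_rfl hD0 (hdA_ge z)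
  -- summability of the Neumann series
  have hgeo : Summable (fun n : ℕ => r ^ n) := summable_geometric_of_lt_one hr0 hr1
  have hsumA : ∀ z w : Zd d, Summable (fun n => matPow KA n z w) := fun z w =>
    Summable.of_nonneg_of_le (fun n => matPow_nonneg KA hKA0 n z w)
      (fun n => matPow_le_pow KA hKA0 hKAsupp hr0 hKArow n z w) hgeo
  have hsumB : ∀ z w : Zd d, Summable (fun n => matPow KB n z w) := fun z w =>
    Summable.of_nonneg_of_le (fun n => matPow_nonneg KB hKB0 n z w)
      (fun n => matPow_le_pow KB hKB0 hKBsupp hr0 hKBrow n z w) hgeo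
  have hNA0 : ∀ z w : Zd d, 0 ≤ ∑' n, matPow KA n z w := fun z w =>
    tsum_nonneg fun n => matPow_nonneg KA hKA0 n z w
  have hNB0 : ∀ z w : Zd d, 0 ≤ ∑' n, matPow KB n z w := fun z w =>
    tsum_nonneg fun n => matPow_nonneg KB hKB0 n z w
  have hNle : ∀ z w : Zd d, (∑' n, matPow KA n z w) ≤ ∑' n, matPow KB n z w := fun z w =>
    Summable.tsum_le_tsum (fun n => matPow_mono KA KB hKA0 hKB0 hKAsupp hKBsupp hKAle n z w)
      (hsumA z w) (hsumB z w)
  have hinvA0 : ∀ z w : Zd d, 0 ≤ invA z w := fun z w =>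
    div_nonneg (hNA0 z w) (hdA0 w).le
  have hinvle : ∀ z w : Zd d, invA z w ≤ invB z w := fun z w =>
    div_le_div₀ (hNB0 z w) (hNle z w) hD0 (hdA_ge w)
  -- part 1
  set S : ℝ := ∑ z ∈ W, invA x z * (η z - η' z) with hS
  set c : ℝ := (ρ ^ 2)⁻¹ * s⁻¹ with hc
  have hc0 : 0 ≤ c := by positivity
  have hdiff : u 1 - u (-1) = -(2 * g) := by simp only [u]; ring
  have h1 : |u 1 - u (-1)| = 2 * (c * |S|) := by
    rw [hdiff, abs_neg, abs_mul, abs_two]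
    have : |g| = c * |S| := by
      rw [show g = c * S from rfl, abs_mul, abs_of_nonneg hc0]
    rw [this]
  refine ⟨h1, ?_⟩
  -- part 2
  have hST : |S| ≤ ∑ z ∈ W, invB x z * |η z - η' z| := by
    calc |S| ≤ ∑ z ∈ W, |invA x z * (η z - η' z)| := Finset.abs_sum_le_sum_abs _ _
      _ = ∑ z ∈ W, invA x z * |η z - η' z| := by
          refine Finset.sum_congr rfl fun z _ => ?_
          rw [abs_mul, abs_of_nonneg (hinvA0 x z)]
      _ ≤ ∑ z ∈ W, invB x z * |η z - η' z| :=
          Finset.sum_le_sum fun z _ =>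
            mul_le_mul_of_nonneg_right (hinvle x z) (abs_nonneg _)
  rw [h1]
  nlinarith [abs_nonneg S]
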